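/- Let d ≥ 1 and n ≥ 1, and let f = Σ_μ c_μ s_μ be a real linear combination of Schur polynomials in x_1, …, x_n, where μ ranges over partitions of d. Suppose λ is a partition of d with ℓ(λ) ≤ n such that c_λ ≠ 0 and c_μ ≠ 0 only if μ ⊴ λ. Then Newton(f) = P_λ. Moreover, if c_μ ≥ 0 for all μ, then f has saturated Newton polytope. -/

import Mathlib

/-!
The coefficient of `x^α` in `s_μ` is the Kostka number `K_{μα}`, and `K_{μα} ≠ 0` exactly when
`sort(α) ⊴ μ`: the weight of a tableau is majorized by its shape because the entries of a column
are distinct, and conversely a tableau of any majorized weight is built letter by letter, each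
new letter filling a horizontal strip. Hence every exponent of `f` is majorized by `λ`, and every
permutation of `λ` is an exponent of `f`, because `K_{μ,σλ} ≠ 0` forces `λ ⊴ μ ⊴ λ`. By Rado's
theorem the integer vectors majorized by `λ` are exactly the lattice points of `P_λ` (the hard
inclusion by moving mass between two coordinates of `λ`, which stays inside `P_λ`). This gives
`Newton(f) = P_λ`, and when all `c_μ ≥ 0` nothing cancels, so every lattice point of `P_λ` is an
exponent of `f`.
-/

/-- A partition, encoded as a weakly decreasing, eventually zero sequence of
nonnegative integers (0-indexed: part `i+1` of the partition is `l i`). -/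
def IsPartition (l : ℕ → ℕ) : Prop :=
  Antitone l ∧ ∃ N, ∀ m, N ≤ m → l m = 0

/-- `l` is a partition of `d`: weakly decreasing, eventually zero, parts summing to `d`. -/
def IsPartitionOf (d : ℕ) (l : ℕ → ℕ) : Prop :=
  Antitone l ∧ ∃ N, (∀ m, N ≤ m → l m = 0) ∧ ∑ i ∈ Finset.range N, l i = d

/-- Dominance order: `Dominates lam mu` means `mu ⊴ lam`, i.e. every partial sum of `mu`
is at most the corresponding partial sum of `lam`. -/
def Dominates (lam mu : ℕ → ℕ) : Prop :=
  ∀ i, ∑ t ∈ Finset.range i, mu t ≤ ∑ t ∈ Finset.range i, lam t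

/-- The cell in row `i`, column `j` (0-indexed) belongs to the Young diagram of `l`
iff `j < l i`.  The hook length of such a cell: 1 + #cells strictly to its right in its
row + #cells strictly above it in its column; for `j < l i` this equals
`(l i - j) + #{i' > i | j < l i'}`. -/
noncomputable def hook (l : ℕ → ℕ) (i j : ℕ) : ℕ :=
  (l i - j) + Nat.card {i' : ℕ // i < i' ∧ j < l i'}

/-- `l` is a `(k+1)`-core: a partition none of whose cells has hook length `k+1`. -/
def IsCore (k : ℕ) (l : ℕ → ℕ) : Prop :=
  IsPartition l ∧ ∀ i j, j < l i → hook l i j ≠ k + 1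

/-- The `(k+1)`-residue of the cell in row `i`, column `j`: `(j - i) mod (k+1)`. -/
def residue (k i j : ℕ) : ZMod (k + 1) :=
  (j : ZMod (k + 1)) - (i : ZMod (k + 1))

/-- `(i,j)` is a top cell of `l`: it lies in the diagram but the cell above it does not. -/
def IsTopCell (l : ℕ → ℕ) (i j : ℕ) : Prop :=
  j < l i ∧ l (i + 1) ≤ j

/-- `(i,j)` is a removable corner of `l`: a cell with no cell above it nor to its right. -/
def IsRemovableCorner (l : ℕ → ℕ) (i j : ℕ) : Prop :=
  j + 1 = l i ∧ l (i + 1) ≤ j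

/-- For top cells `c' = (i',j')` and `c = (i,j)` with `c` weakly southeast of `c'`,
`hBetween l i' j' i j` is `#{x | i ≤ x ≤ i', (x,j') ∈ l} + #{y | j'+1 ≤ y ≤ j, (i,y) ∈ l}`. -/
def hBetween (l : ℕ → ℕ) (i' j' i j : ℕ) : ℕ :=
  ((Finset.Icc i i').filter (fun x => j' < l x)).card +
    ((Finset.Icc (j' + 1) j).filter (fun y => y < l i)).card

/-- `pMap k l i` is the number of cells in row `i` of `l` with hook length at most `k`;
the sequence `pMap k l` is `p(l)`. -/
noncomputable def pMap (k : ℕ) (l : ℕ → ℕ) (i : ℕ) : ℕ :=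
  ((Finset.range (l i)).filter (fun j => hook l i j ≤ k)).card

/-- A semistandard Young tableau of shape `l`, with 0-indexed entries (entry `m`
represents the letter `m+1`): rows weakly increase, columns strictly increase,
and (as a normalization) entries outside the diagram are `0`. -/
structure SSYT (l : ℕ → ℕ) where
  entry : ℕ → ℕ → ℕ
  rowWeak : ∀ i j, j + 1 < l i → entry i j ≤ entry i (j + 1)
  colStrict : ∀ i j, j < l (i + 1) → entry i j < entry (i + 1) j
  zero_outside : ∀ i j, l i ≤ j → entry i j = 0

/-- The weight of an SSYT: `T.weight m` is the number of cells of the diagram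
whose entry is `m`. -/
noncomputable def SSYT.weight {l : ℕ → ℕ} (T : SSYT l) (m : ℕ) : ℕ :=
  Nat.card {p : ℕ × ℕ // p.2 < l p.1 ∧ T.entry p.1 p.2 = m}

/-- The `k`-weight of an SSYT: `T.kweight k m` is the number of distinct
`(k+1)`-residues among the cells whose entry is `m`. -/
noncomputable def SSYT.kweight {l : ℕ → ℕ} (T : SSYT l) (k m : ℕ) : ℕ :=
  Nat.card {r : ZMod (k + 1) // ∃ i j, j < l i ∧ T.entry i j = m ∧ residue k i j = r}

/-- The coefficient of the monomial with exponent vector `α` in `f`. -/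
noncomputable def coeffOf {n : ℕ} (f : MvPolynomial (Fin n) ℝ) (α : Fin n → ℕ) : ℝ :=
  f.coeff (Finsupp.equivFunOnFinite.symm α)

/-- `f` is the Schur polynomial of shape `l` in `x_1, …, x_n`: the coefficient of `x^α`
is the number of SSYT of shape `l` with entries among the `n` letters whose weight is `α`. -/
def IsSchurPoly (n : ℕ) (l : ℕ → ℕ) (f : MvPolynomial (Fin n) ℝ) : Prop :=
  ∀ α : Fin n → ℕ,
    coeffOf f α =
      (Nat.card {T : SSYT l // (∀ i j, j < l i → T.entry i j < n) ∧
        ∀ m : Fin n, T.weight (m : ℕ) = α m} : ℝ)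

/-- `f` is the dual `k`-Schur polynomial of shape the `(k+1)`-core `l` in `x_1, …, x_n`:
the coefficient of `x^α` is the number of SSYT of shape `l` with entries among the `n`
letters whose `k`-weight is `α`. -/
def IsDualKSchurPoly (n k : ℕ) (l : ℕ → ℕ) (f : MvPolynomial (Fin n) ℝ) : Prop :=
  ∀ α : Fin n → ℕ,
    coeffOf f α =
      (Nat.card {T : SSYT l // (∀ i j, j < l i → T.entry i j < n) ∧
        ∀ m : Fin n, T.kweight k (m : ℕ) = α m} : ℝ)

/-- The Newton polytope of `f`: the convex hull in `ℝ^n` of the exponent vectors of the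
monomials of `f` with nonzero coefficient. -/
noncomputable def newtonPolytope {n : ℕ} (f : MvPolynomial (Fin n) ℝ) : Set (Fin n → ℝ) :=
  convexHull ℝ {x | ∃ α : Fin n → ℕ, coeffOf f α ≠ 0 ∧ x = fun i => (α i : ℝ)}

/-- `f` has saturated Newton polytope: the lattice points of `Newton(f)` are exactly
the exponent vectors of `f`. -/
def HasSNP {n : ℕ} (f : MvPolynomial (Fin n) ℝ) : Prop :=
  ∀ x : Fin n → ℝ,
    (x ∈ newtonPolytope f ∧ ∀ i, ∃ m : ℤ, x i = (m : ℝ)) ↔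
      ∃ α : Fin n → ℕ, coeffOf f α ≠ 0 ∧ x = fun i => (α i : ℝ)

/-- The `λ`-permutahedron in `ℝ^n`: the convex hull of all coordinate permutations of
`(l 0, …, l (n-1))`. -/
noncomputable def permutahedron (n : ℕ) (l : ℕ → ℕ) : Set (Fin n → ℝ) :=
  convexHull ℝ {v : Fin n → ℝ | ∃ σ : Equiv.Perm (Fin n), ∀ i, v i = (l (σ i).val : ℝ)}

/-- A subset `J ⊆ ℕ^n` is M-convex. -/
def MConvex {n : ℕ} (J : Set (Fin n → ℕ)) : Prop :=
  ∀ α ∈ J, ∀ β ∈ J, ∀ i : Fin n, β i < α i →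
    ∃ j : Fin n, α j < β j ∧
      (fun t => if t = i then α t - 1 else if t = j then α t + 1 else α t) ∈ J

/-- `sort(α) ⊴ lam`: some weakly decreasing rearrangement of `α` (padded with zeros)
is dominated by `lam`. -/
def SortDominatedBy (n : ℕ) (α : Fin n → ℕ) (lam : ℕ → ℕ) : Prop :=
  ∃ β : ℕ → ℕ, Antitone β ∧ (∀ m, n ≤ m → β m = 0) ∧
    (∃ σ : Equiv.Perm (Fin n), ∀ i : Fin n, β i = α (σ i)) ∧
    Dominates lam β

open Finset

lemma sum_range_eq_of_eq_zero {μ : ℕ → ℕ} {N m : ℕ} (hN : ∀ i, N ≤ i → μ i = 0) (hm : N ≤ m) :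
    ∑ t ∈ range m, μ t = ∑ t ∈ range N, μ t :=
  (sum_subset (range_subset_range.2 hm) fun t _ ht => hN t (by simpa using ht)).symm

lemma sum_range_add_eq_of_eqOn_Ico {x y : ℕ → ℕ} {a b : ℕ} (hab : a ≤ b)
    (h : ∀ t, a ≤ t → t < b → x t = y t) :
    ∑ t ∈ range b, x t + ∑ t ∈ range a, y t = ∑ t ∈ range b, y t + ∑ t ∈ range a, x t := by
  rw [← sum_range_add_sum_Ico x hab, ← sum_range_add_sum_Ico y hab,
    sum_congr rfl fun t ht => h t (mem_Ico.1 ht).1 (mem_Ico.1 ht).2]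
  ring

lemma sum_le_sum_range_card_of_antitone {lam : ℕ → ℕ} (hlam : Antitone lam) (W : Finset ℕ) :
    ∑ t ∈ W, lam t ≤ ∑ t ∈ range #W, lam t := by
  induction W using Finset.induction_on_max with
  | empty => simp
  | insert a W hlt ih =>
    have hcard : #W ≤ a := by
      simpa using card_le_card fun t ht => mem_range.2 (hlt t ht)
    rw [sum_insert fun ha => (hlt a ha).false, card_insert_of_notMem fun ha => (hlt a ha).false,
      sum_range_succ, add_comm]
    exact add_le_add ih (hlam hcard)

namespace SSYT

variable {μ : ℕ → ℕ}

lemma ext {T U : SSYT μ} (h : T.entry = U.entry) : T = U := by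
  cases T; cases U; simp_all

lemma entry_lt_entry_of_lt (hμ : Antitone μ) (T : SSYT μ) {i i' j : ℕ} (hi : i < i')
    (hj : j < μ i') : T.entry i j < T.entry i' j := by
  induction i' with
  | zero => omega
  | succ k ih =>
    rcases (Nat.lt_succ_iff_lt_or_eq.mp hi) with h | rfl
    · exact (ih h (hj.trans_le (hμ k.le_succ))).trans (T.colStrict k j hj)
    · exact T.colStrict i j hj

lemma le_entry (hμ : Antitone μ) (T : SSYT μ) {i j : ℕ} (hj : j < μ i) : i ≤ T.entry i j := by
  induction i with
  | zero => omega
  | succ k ih => exact (ih (hj.trans_le (hμ k.le_succ))).trans_lt (T.colStrict k j hj)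

lemma shape_eq_zero_of_entry_lt (hμ : Antitone μ) (T : SSYT μ) {n : ℕ}
    (hT : ∀ i j, j < μ i → T.entry i j < n) {i : ℕ} (hi : n ≤ i) : μ i = 0 := by
  by_contra h
  have := T.le_entry hμ (Nat.pos_of_ne_zero h)
  have := hT i 0 (Nat.pos_of_ne_zero h)
  omega

end SSYT

def cells (μ : ℕ → ℕ) (N : ℕ) : Finset (ℕ × ℕ) :=
  (range N ×ˢ range (μ 0)).filter fun p => p.2 < μ p.1

section cells

variable {μ : ℕ → ℕ}

lemma mem_cells (hμ : Antitone μ) {N : ℕ} {p : ℕ × ℕ} :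
    p ∈ cells μ N ↔ p.1 < N ∧ p.2 < μ p.1 := by
  have := hμ (Nat.zero_le p.1)
  simp only [cells, mem_filter, mem_product, mem_range]
  omega

lemma card_cells (hμ : Antitone μ) (N : ℕ) : #(cells μ N) = ∑ i ∈ range N, μ i := by
  rw [cells, card_filter, sum_product]
  refine sum_congr rfl fun i _ => ?_
  have : (range (μ 0)).filter (fun j => j < μ i) = range (μ i) := by
    ext j; have := hμ (Nat.zero_le i); simp only [mem_filter, mem_range]; omega
  rw [← card_filter, this, card_range]

lemma card_filter_cells_eq_sum_column (N : ℕ) (Q : ℕ × ℕ → Prop) [DecidablePred Q] :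
    #((cells μ N).filter Q) =
      ∑ j ∈ range (μ 0), #((range N).filter fun i => j < μ i ∧ Q (i, j)) := by
  rw [cells, filter_filter, card_filter, sum_product_right]
  simp only [card_filter]

/-- The entries of a column are distinct, and a column meets the first `#W` rows in an initial
segment. -/
lemma SSYT.card_column_entry_mem_le (hμ : Antitone μ) (T : SSYT μ) (N j : ℕ) (W : Finset ℕ) :
    #((range N).filter fun i => j < μ i ∧ T.entry i j ∈ W) ≤
      #((range #W).filter fun i => j < μ i) := by
  by_cases hcol : ∀ i < #W, j < μ i
  · rw [filter_true_of_mem fun i hi => hcol i (mem_range.1 hi), card_range]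
    refine card_le_card_of_injOn (fun i => T.entry i j) (fun i hi => (mem_filter.1 hi).2.2) ?_
    intro i hi i' hi' h
    simp only [coe_filter, Set.mem_ofPred_eq] at hi hi'
    by_contra hne
    rcases Nat.lt_or_gt_of_ne hne with hlt | hlt
    · exact (T.entry_lt_entry_of_lt hμ hlt hi'.2.1).ne h
    · exact (T.entry_lt_entry_of_lt hμ hlt hi.2.1).ne' h
  · push Not at hcol
    obtain ⟨i₀, hi₀, hj⟩ := hcol
    refine card_le_card fun i hi => ?_
    simp only [mem_filter, mem_range] at hi ⊢
    refine ⟨?_, hi.2.1⟩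
    by_contra hle
    exact absurd (hi.2.1.trans_le (hμ (by omega : i₀ ≤ i))) (not_lt.2 hj)

end cells

namespace SSYT

variable {μ : ℕ → ℕ} (hμ : Antitone μ) {N : ℕ} (hN : ∀ i, N ≤ i → μ i = 0)
include hμ hN

lemma weight_eq_card (T : SSYT μ) (m : ℕ) :
    T.weight m = #((cells μ N).filter fun p => T.entry p.1 p.2 = m) := by
  refine Nat.subtype_card _ fun p => ?_
  rw [mem_filter, mem_cells hμ]
  by_cases hp : p.1 < N
  · tauto
  · simp [hp, hN p.1 (not_lt.1 hp)]

lemma sum_weight_eq_card (T : SSYT μ) (W : Finset ℕ) :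
    ∑ m ∈ W, T.weight m = #((cells μ N).filter fun p => T.entry p.1 p.2 ∈ W) := by
  rw [card_eq_sum_card_fiberwise (s := (cells μ N).filter fun p => T.entry p.1 p.2 ∈ W)
    (f := fun p => T.entry p.1 p.2) (t := W) fun p hp => (mem_filter.1 hp).2]
  refine sum_congr rfl fun m hm => ?_
  rw [T.weight_eq_card hμ hN, filter_filter]
  congr 1
  ext p
  simp only [mem_filter]
  exact ⟨fun ⟨hp, he⟩ => ⟨hp, he ▸ hm, he⟩, fun ⟨hp, _, he⟩ => ⟨hp, he⟩⟩

lemma sum_weight_le (T : SSYT μ) (W : Finset ℕ) :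
    ∑ m ∈ W, T.weight m ≤ ∑ t ∈ range #W, μ t := by
  calc ∑ m ∈ W, T.weight m
      = ∑ j ∈ range (μ 0), #((range N).filter fun i => j < μ i ∧ T.entry i j ∈ W) := by
        rw [T.sum_weight_eq_card hμ hN, card_filter_cells_eq_sum_column]
    _ ≤ ∑ j ∈ range (μ 0), #((range #W).filter fun i => j < μ i ∧ True) := by
        simp only [and_true]
        exact sum_le_sum fun j _ => T.card_column_entry_mem_le hμ N j W
    _ = ∑ t ∈ range #W, μ t := by
        rw [← card_filter_cells_eq_sum_column #W fun _ => True, filter_true, card_cells hμ]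

lemma sum_weight_range_eq (T : SSYT μ) {n : ℕ} (hT : ∀ i j, j < μ i → T.entry i j < n) :
    ∑ m ∈ range n, T.weight m = ∑ i ∈ range N, μ i := by
  rw [T.sum_weight_eq_card hμ hN, filter_true_of_mem, card_cells hμ]
  intro p hp
  exact mem_range.2 (hT p.1 p.2 ((mem_cells hμ).1 hp).2)

end SSYT

/-- `sort(α) ⊴ lam`, phrased without sorting `α`. -/
def IsMajorizedBy {n : ℕ} (α : Fin n → ℕ) (lam : ℕ → ℕ) : Prop :=
  (∀ V : Finset (Fin n), ∑ i ∈ V, α i ≤ ∑ t ∈ range #V, lam t) ∧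
    ∑ i, α i = ∑ t ∈ range n, lam t

noncomputable def kostkaNumber (n : ℕ) (μ : ℕ → ℕ) (α : Fin n → ℕ) : ℕ :=
  Nat.card {T : SSYT μ // (∀ i j, j < μ i → T.entry i j < n) ∧ ∀ m : Fin n, T.weight m = α m}

section kostka

variable {n : ℕ} {μ : ℕ → ℕ}

lemma isMajorizedBy_of_kostkaNumber_ne_zero (hμ : Antitone μ) {α : Fin n → ℕ}
    (h : kostkaNumber n μ α ≠ 0) : (∀ i, n ≤ i → μ i = 0) ∧ IsMajorizedBy α μ := by
  obtain ⟨⟨T, hTn, hTα⟩⟩ := (Nat.card_ne_zero.1 h).1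
  have hN : ∀ i, n ≤ i → μ i = 0 := fun i => T.shape_eq_zero_of_entry_lt hμ hTn
  refine ⟨hN, fun V => ?_, ?_⟩
  · calc ∑ i ∈ V, α i = ∑ m ∈ V.map Fin.valEmbedding, T.weight m := by
          simp only [sum_map, Fin.valEmbedding_apply, hTα]
      _ ≤ ∑ t ∈ range #V, μ t := by
          simpa only [card_map] using T.sum_weight_le hμ hN (V.map Fin.valEmbedding)
  · simp only [← hTα]
    rw [Fin.sum_univ_eq_sum_range (fun m => T.weight m), T.sum_weight_range_eq hμ hN hTn]

lemma finite_ssyt_entry_lt (hμ : Antitone μ) (hN : ∀ i, n ≤ i → μ i = 0) :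
    Finite {T : SSYT μ // ∀ i j, j < μ i → T.entry i j < n} := by
  have hle : ∀ (T : {T : SSYT μ // ∀ i j, j < μ i → T.entry i j < n}) i j,
      T.1.entry i j < n + 1 := by
    intro T i j
    by_cases hj : j < μ i
    · exact (T.2 i j hj).trans (Nat.lt_succ_self n)
    · rw [T.1.zero_outside i j (not_lt.1 hj)]; exact Nat.succ_pos n
  refine Finite.of_injective
    (fun T (p : Fin n × Fin (μ 0)) => (⟨T.1.entry p.1 p.2, hle T _ _⟩ : Fin (n + 1))) ?_
  intro T U hTU
  refine Subtype.ext (SSYT.ext (funext₂ fun i j => ?_))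
  by_cases hin : i < n ∧ j < μ 0
  · exact congrArg Fin.val (congrFun hTU (⟨i, hin.1⟩, ⟨j, hin.2⟩))
  · have hout : μ i ≤ j := by
      by_cases hi : i < n
      · exact (hμ (Nat.zero_le i)).trans (not_lt.1 (hin ⟨hi, ·⟩))
      · rw [hN i (not_lt.1 hi)]; exact Nat.zero_le j
    rw [T.1.zero_outside i j hout, U.1.zero_outside i j hout]

end kostka

/-- The shape left when a horizontal strip of `a` cells is removed from `μ`, lowest rows
first. -/
def peelStrip (μ : ℕ → ℕ) (a i : ℕ) : ℕ :=
  max (μ (i + 1)) (μ i - (a - μ (i + 1)))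

section peelStrip

variable {μ : ℕ → ℕ} (hμ : Antitone μ)
include hμ

lemma peelStrip_interlace (a i : ℕ) : μ (i + 1) ≤ peelStrip μ a i ∧ peelStrip μ a i ≤ μ i := by
  have : μ (i + 1) ≤ μ i := hμ (by omega)
  simp only [peelStrip]
  omega

lemma sum_range_peelStrip_add {a : ℕ} (ha : a ≤ μ 0) (k : ℕ) :
    ∑ t ∈ range k, peelStrip μ a t + a = ∑ t ∈ range k, μ t + min a (μ k) := by
  induction k with
  | zero => simpa using ha
  | succ k ih =>
    have : μ (k + 1) ≤ μ k := hμ (by omega)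
    simp only [sum_range_succ, peelStrip] at ih ⊢
    omega

lemma IsMajorizedBy.init_peelStrip {n : ℕ} {α : Fin (n + 1) → ℕ} (h : IsMajorizedBy α μ) :
    μ n ≤ α (Fin.last n) ∧
      IsMajorizedBy (fun i => α i.castSucc) (peelStrip μ (α (Fin.last n))) := by
  set a := α (Fin.last n)
  have hbound : ∀ V : Finset (Fin n), ∑ i ∈ V, α i.castSucc ≤ ∑ t ∈ range #V, μ t := by
    intro V
    simpa using h.1 (V.map Fin.castSuccEmb)
  have hbound' : ∀ V : Finset (Fin n), ∑ i ∈ V, α i.castSucc + a ≤ ∑ t ∈ range (#V + 1), μ t := by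
    intro V
    have hnot : Fin.last n ∉ V.map Fin.castSuccEmb := by simp [Fin.castSucc_ne_last]
    simpa [sum_insert hnot, card_insert_of_notMem hnot, add_comm] using
      h.1 (insert (Fin.last n) (V.map Fin.castSuccEmb))
  have htot : ∑ i : Fin n, α i.castSucc + a = ∑ t ∈ range n, μ t + μ n := by
    rw [← Fin.sum_univ_castSucc, h.2, sum_range_succ]
  have hfirst : a ≤ μ 0 := by simpa using hbound' ∅
  have hlast : μ n ≤ a := by
    have := hbound univ
    simp only [card_univ, Fintype.card_fin] at this
    omega
  refine ⟨hlast, fun V => ?_, ?_⟩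
  · have hk := sum_range_peelStrip_add hμ hfirst #V
    have hV := hbound V
    have hV' := hbound' V
    rw [sum_range_succ] at hV'
    show ∑ i ∈ V, α i.castSucc ≤ ∑ t ∈ range #V, peelStrip μ a t
    omega
  · have hk := sum_range_peelStrip_add hμ hfirst n
    show ∑ i : Fin n, α i.castSucc = ∑ t ∈ range n, peelStrip μ a t
    omega

end peelStrip

namespace SSYT

variable {ν μ : ℕ → ℕ} {n : ℕ}

def addStrip (T : SSYT ν) (hT : ∀ i j, j < ν i → T.entry i j < n)
    (hνμ : ∀ i, μ (i + 1) ≤ ν i ∧ ν i ≤ μ i) : SSYT μ where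
  entry i j := if j < ν i then T.entry i j else if j < μ i then n else 0
  rowWeak i j hj := by
    have := hνμ i
    split_ifs <;> first | omega | exact T.rowWeak i j ‹_› | exact (hT i j ‹_›).le
  colStrict i j hj := by
    have := hνμ i
    have := hνμ (i + 1)
    split_ifs <;> first | omega | exact T.colStrict i j ‹_› | exact hT i j ‹_›
  zero_outside i j hj := by
    have := hνμ i
    split_ifs <;> omega

variable (T : SSYT ν) (hT : ∀ i j, j < ν i → T.entry i j < n)
  (hνμ : ∀ i, μ (i + 1) ≤ ν i ∧ ν i ≤ μ i)

lemma addStrip_entry_lt : ∀ i j, j < μ i → (T.addStrip hT hνμ).entry i j < n + 1 := by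
  intro i j hj
  simp only [addStrip]
  split_ifs with h
  · exact (hT i j h).trans (Nat.lt_succ_self n)
  · exact Nat.lt_succ_self n

lemma weight_addStrip_of_lt {m : ℕ} (hm : m < n) :
    (T.addStrip hT hνμ).weight m = T.weight m := by
  refine Nat.card_congr (Equiv.subtypeEquivRight fun p => ?_)
  have := hνμ p.1
  simp only [addStrip]
  constructor
  · rintro ⟨hp, he⟩
    split_ifs at he with h
    · exact ⟨h, he⟩
    · omega
  · rintro ⟨hp, he⟩
    exact ⟨by omega, by rw [if_pos hp, he]⟩

end SSYT

/-- The tableau is built by induction on `n`: the letter `n - 1` fills the strip removed by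
`peelStrip`. -/
theorem exists_ssyt_of_isMajorizedBy {n : ℕ} {μ : ℕ → ℕ} (hμ : Antitone μ)
    (hN : ∀ i, n ≤ i → μ i = 0) {α : Fin n → ℕ} (h : IsMajorizedBy α μ) :
    ∃ T : SSYT μ, (∀ i j, j < μ i → T.entry i j < n) ∧ ∀ m : Fin n, T.weight m = α m := by
  induction n generalizing μ with
  | zero =>
    have hμ0 : ∀ i, μ i = 0 := fun i => hN i (Nat.zero_le i)
    refine ⟨⟨fun _ _ => 0, ?_, ?_, fun _ _ _ => rfl⟩, ?_, finZeroElim⟩ <;> simp [hμ0]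
  | succ n ih =>
    set a := α (Fin.last n)
    obtain ⟨hlast, hmaj⟩ := h.init_peelStrip hμ
    have hνμ := peelStrip_interlace hμ a
    have hν : Antitone (peelStrip μ a) := antitone_nat_of_succ_le fun i =>
      (hνμ (i + 1)).2.trans (hνμ i).1
    have hνN : ∀ i, n ≤ i → peelStrip μ a i = 0 := by
      intro i hi
      have := hN (i + 1) (by omega)
      simp only [peelStrip]
      rcases hi.eq_or_lt with rfl | hi
      · omega
      · have := hN i hi
        omega
    obtain ⟨T, hT, hTα⟩ := ih hν hνN hmaj
    refine ⟨T.addStrip hT hνμ, T.addStrip_entry_lt hT hνμ, Fin.lastCases ?_ fun m => ?_⟩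
    · have htot := (T.addStrip hT hνμ).sum_weight_range_eq hμ hN (T.addStrip_entry_lt hT hνμ)
      have htot' := T.sum_weight_range_eq hν hνN hT
      have hα := h.2
      have hα' : ∑ i : Fin n, α i.castSucc = ∑ t ∈ range n, peelStrip μ a t := hmaj.2
      rw [Fin.sum_univ_castSucc] at hα
      rw [sum_range_succ,
        sum_congr rfl fun m hm => T.weight_addStrip_of_lt hT hνμ (mem_range.1 hm)] at htot
      rw [Fin.val_last]
      omega
    · rw [Fin.val_castSucc, T.weight_addStrip_of_lt hT hνμ m.isLt]
      exact hTα m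

section permutahedron

variable {n : ℕ} {lam : ℕ → ℕ}

lemma perm_mem_permutahedron (σ : Equiv.Perm (Fin n)) :
    (fun i => (lam (σ i) : ℝ)) ∈ permutahedron n lam :=
  subset_convexHull ℝ _ ⟨σ, fun _ => rfl⟩

lemma permutahedron_subset {C : Set (Fin n → ℝ)} (hC : Convex ℝ C)
    (h : ∀ σ : Equiv.Perm (Fin n), (fun i => (lam (σ i) : ℝ)) ∈ C) : permutahedron n lam ⊆ C := by
  refine convexHull_min ?_ hC
  rintro v ⟨σ, hσ⟩
  rw [show v = fun i => (lam (σ i) : ℝ) from funext hσ]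
  exact h σ

lemma comp_perm_mem_permutahedron {x : Fin n → ℝ} (hx : x ∈ permutahedron n lam)
    (π : Equiv.Perm (Fin n)) : x ∘ π ∈ permutahedron n lam := by
  have hlin : IsLinearMap ℝ fun v : Fin n → ℝ => v ∘ π := ⟨fun _ _ => rfl, fun _ _ => rfl⟩
  refine permutahedron_subset ((convex_convexHull ℝ _).is_linear_preimage hlin) (fun σ => ?_) hx
  exact perm_mem_permutahedron (π.trans σ)

lemma sum_le_of_mem_permutahedron (hlam : Antitone lam) {x : Fin n → ℝ}
    (hx : x ∈ permutahedron n lam) (V : Finset (Fin n)) :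
    ∑ i ∈ V, x i ≤ ∑ t ∈ range #V, (lam t : ℝ) := by
  have hlin : IsLinearMap ℝ fun v : Fin n → ℝ => ∑ i ∈ V, v i :=
    ⟨fun _ _ => sum_add_distrib, fun _ _ => by simp [mul_sum]⟩
  refine permutahedron_subset (convex_halfSpace_le hlin _) (fun σ => ?_) hx
  have := sum_le_sum_range_card_of_antitone hlam (V.map (σ.toEmbedding.trans Fin.valEmbedding))
  simp only [sum_map, card_map, Function.Embedding.trans_apply, Equiv.coe_toEmbedding,
    Fin.valEmbedding_apply] at this
  simp only [Set.mem_ofPred_eq]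
  exact_mod_cast this

lemma sum_eq_of_mem_permutahedron {x : Fin n → ℝ} (hx : x ∈ permutahedron n lam) :
    ∑ i, x i = ∑ t ∈ range n, (lam t : ℝ) := by
  have hlin : IsLinearMap ℝ fun v : Fin n → ℝ => ∑ i, v i :=
    ⟨fun _ _ => sum_add_distrib, fun _ _ => by simp [mul_sum]⟩
  refine permutahedron_subset (convex_hyperplane hlin _) (fun σ => ?_) hx
  simp only [Set.mem_ofPred_eq]
  rw [Equiv.sum_comp σ fun j => (lam j : ℝ), Fin.sum_univ_eq_sum_range (fun t => (lam t : ℝ))]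

lemma nonneg_of_mem_permutahedron {x : Fin n → ℝ} (hx : x ∈ permutahedron n lam) (i : Fin n) :
    0 ≤ x i := by
  have hlin : IsLinearMap ℝ fun v : Fin n → ℝ => v i := ⟨fun _ _ => rfl, fun _ _ => rfl⟩
  refine permutahedron_subset (convex_halfSpace_ge hlin 0) (fun σ => ?_) hx
  simp only [Set.mem_ofPred_eq]
  positivity

lemma isMajorizedBy_of_mem_permutahedron (hlam : Antitone lam) {α : Fin n → ℕ}
    (hα : (fun i => (α i : ℝ)) ∈ permutahedron n lam) : IsMajorizedBy α lam :=
  ⟨fun V => by exact_mod_cast sum_le_of_mem_permutahedron hlam hα V, by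
    exact_mod_cast sum_eq_of_mem_permutahedron hα⟩

end permutahedron

def transfer (x : ℕ → ℕ) (j k δ : ℕ) (t : ℕ) : ℕ :=
  if t = j then x j - δ else if t = k then x k + δ else x t

section transfer

variable {x y : ℕ → ℕ} {j k δ : ℕ}

lemma sum_range_transfer (hjk : j ≠ k) (hδ : δ ≤ x j) (m : ℕ) :
    ∑ t ∈ range m, transfer x j k δ t + (if j < m then δ else 0) =
      ∑ t ∈ range m, x t + (if k < m then δ else 0) := by
  induction m with
  | zero => simp
  | succ m ih =>
    simp only [sum_range_succ, transfer] at ih ⊢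
    split_ifs at ih ⊢ <;> subst_vars <;> omega

/-- A transfer between two coordinates, by at most their difference, is a convex combination
of the vector and its image under the transposition of the two coordinates. -/
lemma permutahedron_transfer_subset {n : ℕ} (hj : j < n) (hk : k < n) (hjk : j ≠ k)
    (hδ : x k + δ ≤ x j) : permutahedron n (transfer x j k δ) ⊆ permutahedron n x := by
  set θ : ℝ := δ / (x j - x k)
  have hθ : θ * (x j - x k) = δ := by
    rcases eq_or_ne (x j : ℝ) (x k) with h | h
    · have hδ0 : δ = 0 := by
        have : x j = x k := by exact_mod_cast h
        omega
      simp [h, hδ0]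
    · exact div_mul_cancel₀ _ (sub_ne_zero.2 h)
  have hδ' : (δ : ℝ) ≤ x j - x k := by
    rw [le_sub_iff_add_le']
    exact_mod_cast hδ
  have hθ0 : 0 ≤ θ := div_nonneg (Nat.cast_nonneg δ) ((Nat.cast_nonneg δ).trans hδ')
  have hθ1 : θ ≤ 1 := div_le_one_of_le₀ hδ' ((Nat.cast_nonneg δ).trans hδ')
  refine permutahedron_subset (convex_convexHull ℝ _) fun σ => ?_
  set p : Fin n := ⟨j, hj⟩
  set q : Fin n := ⟨k, hk⟩
  have hcomb : (fun i => (transfer x j k δ (σ i) : ℝ)) =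
      (1 - θ) • (fun i => (x (σ i) : ℝ)) + θ • fun i => (x ((σ.trans (Equiv.swap p q)) i) : ℝ) := by
    funext i
    simp only [Pi.add_apply, Pi.smul_apply, smul_eq_mul, Equiv.trans_apply, transfer]
    by_cases hp : σ i = p
    · rw [hp, Equiv.swap_apply_left, if_pos rfl, Nat.cast_sub (le_add_self.trans hδ)]
      linear_combination hθ
    by_cases hq : σ i = q
    · rw [hq, Equiv.swap_apply_right, if_neg (Ne.symm hjk), if_pos rfl, Nat.cast_add]
      linear_combination -hθ
    rw [Equiv.swap_apply_of_ne_of_ne hp hq, if_neg (fun h => hp (Fin.ext h)),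
      if_neg (fun h => hq (Fin.ext h))]
    ring
  rw [hcomb]
  exact convex_convexHull ℝ _ (perm_mem_permutahedron σ) (perm_mem_permutahedron _)
    (sub_nonneg.2 hθ1) hθ0 (sub_add_cancel 1 θ)


lemma antitone_transfer (hx : Antitone x) (hy : Antitone y) (hjk : j < k)
    (hmid : ∀ t, j < t → t < k → x t = y t) (hj : y j + δ ≤ x j) (hk : x k + δ ≤ y k) :
    Antitone (transfer x j k δ) := by
  refine antitone_nat_of_succ_le fun t => ?_
  have hxt : x (t + 1) ≤ x t := hx (by omega)
  have hyt : y (t + 1) ≤ y t := hy (by omega)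
  have hmt := hmid t
  have hmt' := hmid (t + 1)
  simp only [transfer]
  split_ifs <;> subst_vars <;> omega

lemma sum_range_le_sum_range_transfer {n : ℕ} (hjk : j < k) (hkn : k ≤ n)
    (hmid : ∀ t, j < t → t < k → x t = y t) (hj : y j + δ ≤ x j)
    (hdom : ∀ m ≤ n, ∑ t ∈ range m, y t ≤ ∑ t ∈ range m, x t) :
    ∀ m ≤ n, ∑ t ∈ range m, y t ≤ ∑ t ∈ range m, transfer x j k δ t := by
  intro m hm
  have hsum := sum_range_transfer (x := x) hjk.ne (le_add_self.trans hj) m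
  have hm' := hdom m hm
  by_cases hjm : j < m ∧ m ≤ k
  · have hIco := sum_range_add_eq_of_eqOn_Ico (show j + 1 ≤ m by omega)
      fun t h1 h2 => hmid t (by omega) (by omega)
    have hj' := hdom j (by omega)
    rw [sum_range_succ, sum_range_succ] at hIco
    split_ifs at hsum <;> omega
  · split_ifs at hsum <;> omega

lemma card_mismatch_transfer_lt {n : ℕ} (hj : j < n) (hk : k < n) (hjk : j ≠ k)
    (hxj : x j ≠ y j) (hxk : x k ≠ y k) (hfix : x j - δ = y j ∨ x k + δ = y k) :
    #((range n).filter fun t => transfer x j k δ t ≠ y t) <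
      #((range n).filter fun t => x t ≠ y t) := by
  have hsub : (range n).filter (fun t => transfer x j k δ t ≠ y t) ⊆
      (range n).filter fun t => x t ≠ y t := by
    intro t ht
    rw [mem_filter] at ht ⊢
    refine ⟨ht.1, ?_⟩
    have ht := ht.2
    simp only [transfer] at ht
    split_ifs at ht with h1 h2
    · exact h1 ▸ hxj
    · exact h2 ▸ hxk
    · exact ht
  refine card_lt_card ((ssubset_iff_of_subset hsub).2 ?_)
  rcases hfix with h | h
  · exact ⟨j, by simp [hj, hxj], by simp [transfer, h]⟩
  · exact ⟨k, by simp [hk, hxk], by simp [transfer, hjk.symm, h]⟩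

end transfer

section rado

variable {n : ℕ} {x y : ℕ → ℕ}

/-- With `j` the last position where `y` falls below `x` and `k` the first later position where
it rises above, moving mass from `j` to `k` keeps `x` sorted and majorizing `y`, and makes the
two agree at `j` or at `k`. -/
lemma exists_transfer (hx : Antitone x) (hy : Antitone y)
    (hdom : ∀ m ≤ n, ∑ t ∈ range m, y t ≤ ∑ t ∈ range m, x t)
    (htot : ∑ t ∈ range n, y t = ∑ t ∈ range n, x t) (hne : ∃ t < n, x t ≠ y t) :
    ∃ j k δ, j < n ∧ k < n ∧ j ≠ k ∧ x k + δ ≤ x j ∧ Antitone (transfer x j k δ) ∧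
      (∀ m ≤ n, ∑ t ∈ range m, y t ≤ ∑ t ∈ range m, transfer x j k δ t) ∧
      ∑ t ∈ range n, y t = ∑ t ∈ range n, transfer x j k δ t ∧
      #((range n).filter fun t => transfer x j k δ t ≠ y t) <
        #((range n).filter fun t => x t ≠ y t) := by
  have hlt : ∃ t < n, y t < x t := by
    by_contra! hle
    obtain ⟨t, ht, hne⟩ := hne
    have := sum_lt_sum (fun t ht => hle t (mem_range.1 ht))
      ⟨t, mem_range.2 ht, lt_of_le_of_ne (hle t ht) hne⟩
    omega
  set j := Nat.findGreatest (fun t => t < n ∧ y t < x t) n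
  obtain ⟨hjn, hj⟩ : j < n ∧ y j < x j :=
    Nat.findGreatest_spec (P := fun t => t < n ∧ y t < x t) (m := hlt.choose)
      hlt.choose_spec.1.le hlt.choose_spec
  have hafter : ∀ t, j < t → t < n → x t ≤ y t := fun t h1 h2 =>
    not_lt.1 fun h => Nat.findGreatest_is_greatest h1 h2.le ⟨h2, h⟩
  have hexk : ∃ t, j < t ∧ t < n ∧ x t < y t := by
    by_contra! hnone
    have hIco := sum_range_add_eq_of_eqOn_Ico (x := x) (y := y) (show j + 1 ≤ n by omega)
      fun t h1 h2 => le_antisymm (hafter t (by omega) h2) (hnone t (by omega) h2)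
    have := hdom j hjn.le
    rw [sum_range_succ, sum_range_succ] at hIco
    omega
  set k := Nat.find hexk
  obtain ⟨hjk, hkn, hk⟩ : j < k ∧ k < n ∧ x k < y k := Nat.find_spec hexk
  have hmid : ∀ t, j < t → t < k → x t = y t := fun t h1 h2 =>
    le_antisymm (hafter t h1 (by omega)) (not_lt.1 fun h => Nat.find_min hexk h2 ⟨h1, by omega, h⟩)
  set δ := min (x j - y j) (y k - x k)
  have hδj : y j + δ ≤ x j := by omega
  have hδk : x k + δ ≤ y k := by omega
  have hsum := sum_range_transfer (x := x) hjk.ne (le_add_self.trans hδj) n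
  refine ⟨j, k, δ, hjn, hkn, hjk.ne, by have := hy hjk.le; omega,
    antitone_transfer hx hy hjk hmid hδj hδk,
    sum_range_le_sum_range_transfer hjk hkn.le hmid hδj hdom, ?_,
    card_mismatch_transfer_lt hjn hkn hjk.ne hj.ne' hk.ne (by omega)⟩
  rw [if_pos hjn, if_pos hkn] at hsum
  omega

theorem mem_permutahedron_of_antitone (hx : Antitone x) (hy : Antitone y)
    (hdom : ∀ m ≤ n, ∑ t ∈ range m, y t ≤ ∑ t ∈ range m, x t)
    (htot : ∑ t ∈ range n, y t = ∑ t ∈ range n, x t) :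
    (fun i : Fin n => (y i : ℝ)) ∈ permutahedron n x := by
  induction hm : #((range n).filter fun t => x t ≠ y t) using Nat.strong_induction_on
    generalizing x with
  | _ m ih =>
    by_cases hne : ∃ t < n, x t ≠ y t
    · obtain ⟨j, k, δ, hj, hk, hjk, hδ, hx', hdom', htot', hlt⟩ :=
        exists_transfer hx hy hdom htot hne
      exact permutahedron_transfer_subset hj hk hjk hδ (ih _ (hm ▸ hlt) hx' hdom' htot' rfl)
    · push Not at hne
      convert perm_mem_permutahedron (lam := x) (Equiv.refl (Fin n)) using 2 with i
      simp [hne i i.isLt]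

end rado

theorem mem_permutahedron_of_isMajorizedBy {n : ℕ} {lam : ℕ → ℕ} (hlam : Antitone lam)
    {α : Fin n → ℕ} (h : IsMajorizedBy α lam) :
    (fun i => (α i : ℝ)) ∈ permutahedron n lam := by
  set τ : Equiv.Perm (Fin n) := Fin.revPerm.trans (Tuple.sort α)
  set A : ℕ → ℕ := fun t => if ht : t < n then α (τ ⟨t, ht⟩) else 0
  have hA : Antitone A := antitone_nat_of_succ_le fun t => by
    by_cases ht : t + 1 < n
    · simp only [A, dif_pos ht, dif_pos (by omega : t < n)]
      exact Tuple.monotone_sort α (Fin.rev_le_rev.2 (Fin.mk_le_mk.2 t.le_succ))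
    · simp [A, dif_neg ht]
  have hsum : ∀ m (hm : m ≤ n), ∑ t ∈ range m, A t =
      ∑ i ∈ univ.map ((Fin.castLEEmb hm).trans τ.toEmbedding), α i := by
    intro m hm
    rw [sum_map, ← Fin.sum_univ_eq_sum_range]
    refine sum_congr rfl fun i _ => ?_
    simp [A, dif_pos (i.isLt.trans_le hm), Fin.castLE]
  have hdom : ∀ m ≤ n, ∑ t ∈ range m, A t ≤ ∑ t ∈ range m, lam t := by
    intro m hm
    simpa [hsum m hm] using h.1 (univ.map ((Fin.castLEEmb hm).trans τ.toEmbedding))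
  have htot : ∑ t ∈ range n, A t = ∑ t ∈ range n, lam t := by
    rw [hsum n le_rfl, ← h.2]
    exact sum_bij (fun i _ => i) (by simp) (fun _ _ _ _ h => h) (by simp) (fun _ _ => rfl)
  convert comp_perm_mem_permutahedron (mem_permutahedron_of_antitone hlam hA hdom htot) τ.symm
    using 2 with i
  simp [A]

lemma IsPartitionOf.sum_range_eq {d n : ℕ} {μ : ℕ → ℕ} (h : IsPartitionOf d μ)
    (hn : ∀ i, n ≤ i → μ i = 0) : ∑ t ∈ range n, μ t = d := by
  obtain ⟨-, N, hN, hd⟩ := h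
  rw [← sum_range_eq_of_eq_zero hn (le_max_left n N), sum_range_eq_of_eq_zero hN (le_max_right n N),
    hd]

lemma Dominates.antisymm {lam μ : ℕ → ℕ} (h₁ : Dominates lam μ) (h₂ : Dominates μ lam) :
    μ = lam := by
  funext t
  have h₁' := h₁ (t + 1)
  have h₂' := h₂ (t + 1)
  rw [sum_range_succ, sum_range_succ] at h₁' h₂'
  have := h₁ t
  have := h₂ t
  omega

section majorization

variable {n : ℕ} {lam μ : ℕ → ℕ}

lemma IsMajorizedBy.of_dominates {α : Fin n → ℕ} (h : IsMajorizedBy α μ) (hμ : Dominates lam μ)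
    (htot : ∑ t ∈ range n, μ t = ∑ t ∈ range n, lam t) : IsMajorizedBy α lam :=
  ⟨fun V => (h.1 V).trans (hμ #V), h.2.trans htot⟩

lemma isMajorizedBy_perm (hlam : Antitone lam) (σ : Equiv.Perm (Fin n)) :
    IsMajorizedBy (fun i => lam (σ i)) lam :=
  isMajorizedBy_of_mem_permutahedron hlam (perm_mem_permutahedron σ)

lemma dominates_of_isMajorizedBy_perm (hlam : ∀ i, n ≤ i → lam i = 0)
    (hμ : ∀ i, n ≤ i → μ i = 0) {σ : Equiv.Perm (Fin n)}
    (h : IsMajorizedBy (fun i => lam (σ i)) μ) : Dominates μ lam := by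
  intro m
  by_cases hm : m ≤ n
  · have hV := h.1 (univ.map ((Fin.castLEEmb hm).trans σ.symm.toEmbedding))
    simp only [sum_map, card_map, card_univ, Fintype.card_fin, Function.Embedding.trans_apply,
      Equiv.coe_toEmbedding, Equiv.apply_symm_apply] at hV
    simpa [Fin.sum_univ_eq_sum_range (fun t => lam t)] using hV
  · have htot := h.2
    rw [Equiv.sum_comp σ fun j => lam j, Fin.sum_univ_eq_sum_range (fun t => lam t)] at htot
    rw [sum_range_eq_of_eq_zero hlam (by omega), sum_range_eq_of_eq_zero hμ (by omega), htot]

end majorization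

theorem kostkaNumber_ne_zero_iff {n : ℕ} {μ : ℕ → ℕ} (hμ : Antitone μ) {α : Fin n → ℕ} :
    kostkaNumber n μ α ≠ 0 ↔ (∀ i, n ≤ i → μ i = 0) ∧ IsMajorizedBy α μ := by
  refine ⟨isMajorizedBy_of_kostkaNumber_ne_zero hμ, fun ⟨hN, h⟩ => ?_⟩
  obtain ⟨T, hT, hTα⟩ := exists_ssyt_of_isMajorizedBy hμ hN h
  have := finite_ssyt_entry_lt hμ hN
  have : Finite {T : SSYT μ // (∀ i j, j < μ i → T.entry i j < n) ∧
      ∀ m : Fin n, T.weight m = α m} :=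
    Finite.of_injective (fun T => (⟨T.1, T.2.1⟩ : {T : SSYT μ // ∀ i j, j < μ i → T.entry i j < n}))
      fun T U h => Subtype.ext (Subtype.mk.inj h)
  exact Nat.card_ne_zero.2 ⟨⟨⟨T, hT, hTα⟩⟩, this⟩

section newton

variable {n : ℕ} {f : MvPolynomial (Fin n) ℝ} {lam : ℕ → ℕ}

lemma newtonPolytope_eq_permutahedron (hlam : Antitone lam)
    (hsupp : ∀ α, coeffOf f α ≠ 0 → IsMajorizedBy α lam)
    (hvert : ∀ σ : Equiv.Perm (Fin n), coeffOf f (fun i => lam (σ i)) ≠ 0) :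
    newtonPolytope f = permutahedron n lam := by
  refine (convexHull_min ?_ (convex_convexHull ℝ _)).antisymm
    (permutahedron_subset (convex_convexHull ℝ _) fun σ => subset_convexHull ℝ _ ⟨_, hvert σ, rfl⟩)
  rintro x ⟨α, hα, rfl⟩
  exact mem_permutahedron_of_isMajorizedBy hlam (hsupp α hα)

lemma hasSNP_of_coeffOf_ne_zero_iff (hlam : Antitone lam)
    (hsupp : ∀ α, coeffOf f α ≠ 0 ↔ IsMajorizedBy α lam) : HasSNP f := by
  have hP := newtonPolytope_eq_permutahedron hlam (fun α => (hsupp α).1)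
    fun σ => (hsupp _).2 (isMajorizedBy_perm hlam σ)
  intro x
  refine ⟨fun ⟨hx, hint⟩ => ?_, fun ⟨α, hα, hx⟩ => ⟨subset_convexHull ℝ _ ⟨α, hα, hx⟩, ?_⟩⟩
  · rw [hP] at hx
    choose m hm using hint
    have hx' : x = fun i => ((m i).toNat : ℝ) := by
      funext i
      have := nonneg_of_mem_permutahedron hx i
      rw [hm i] at this ⊢
      exact_mod_cast (Int.toNat_of_nonneg (by exact_mod_cast this)).symm
    exact ⟨_, (hsupp _).2 (isMajorizedBy_of_mem_permutahedron hlam (hx' ▸ hx)), hx'⟩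
  · exact fun i => ⟨α i, by simp [hx]⟩

end newton

lemma coeffOf_sum_smul {n : ℕ} {ι : Type*} (S : Finset ι) (c : ι → ℝ)
    (g : ι → MvPolynomial (Fin n) ℝ) (α : Fin n → ℕ) :
    coeffOf (∑ μ ∈ S, c μ • g μ) α = ∑ μ ∈ S, c μ * coeffOf (g μ) α := by
  simp [coeffOf, MvPolynomial.coeff_sum]

section kostkaCombination

variable {d n : ℕ} {S : Finset (ℕ → ℕ)} {c : (ℕ → ℕ) → ℝ} {f : MvPolynomial (Fin n) ℝ}
  {lam : ℕ → ℕ}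

lemma isMajorizedBy_of_coeffOf_ne_zero (hS : ∀ μ, μ ∈ S ↔ IsPartitionOf d μ)
    (hf : ∀ α, coeffOf f α = ∑ μ ∈ S, c μ * kostkaNumber n μ α) (hlam : IsPartitionOf d lam)
    (hlen : ∀ i, n ≤ i → lam i = 0) (hdom : ∀ μ ∈ S, c μ ≠ 0 → Dominates lam μ)
    {α : Fin n → ℕ} (hα : coeffOf f α ≠ 0) : IsMajorizedBy α lam := by
  rw [hf] at hα
  obtain ⟨μ, hμ, hne⟩ := exists_ne_zero_of_sum_ne_zero hα
  have hμ' := (hS μ).1 hμ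
  obtain ⟨hN, hmaj⟩ :=
    (kostkaNumber_ne_zero_iff hμ'.1).1 (by exact_mod_cast right_ne_zero_of_mul hne)
  exact hmaj.of_dominates (hdom μ hμ (left_ne_zero_of_mul hne))
    ((hμ'.sum_range_eq hN).trans (hlam.sum_range_eq hlen).symm)

/-- Only `μ = lam` contributes: `K_{μ,σλ} ≠ 0` forces `λ ⊴ μ`. -/
lemma coeffOf_perm_ne_zero (hS : ∀ μ, μ ∈ S ↔ IsPartitionOf d μ)
    (hf : ∀ α, coeffOf f α = ∑ μ ∈ S, c μ * kostkaNumber n μ α) (hlam : IsPartitionOf d lam)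
    (hlen : ∀ i, n ≤ i → lam i = 0) (hclam : c lam ≠ 0)
    (hdom : ∀ μ ∈ S, c μ ≠ 0 → Dominates lam μ) (σ : Equiv.Perm (Fin n)) :
    coeffOf f (fun i => lam (σ i)) ≠ 0 := by
  rw [hf, sum_eq_single_of_mem lam ((hS lam).2 hlam)]
  · exact mul_ne_zero hclam (Nat.cast_ne_zero.2
      ((kostkaNumber_ne_zero_iff hlam.1).2 ⟨hlen, isMajorizedBy_perm hlam.1 σ⟩))
  · intro μ hμ hne
    by_contra hcμ
    obtain ⟨hN, hmaj⟩ := (kostkaNumber_ne_zero_iff ((hS μ).1 hμ).1).1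
      (by exact_mod_cast right_ne_zero_of_mul hcμ)
    exact hne ((hdom μ hμ (left_ne_zero_of_mul hcμ)).antisymm
      (dominates_of_isMajorizedBy_perm hlen hN hmaj))

lemma coeffOf_pos_of_isMajorizedBy (hS : ∀ μ, μ ∈ S ↔ IsPartitionOf d μ)
    (hf : ∀ α, coeffOf f α = ∑ μ ∈ S, c μ * kostkaNumber n μ α) (hlam : IsPartitionOf d lam)
    (hlen : ∀ i, n ≤ i → lam i = 0) (hclam : c lam ≠ 0) (hpos : ∀ μ ∈ S, 0 ≤ c μ)
    {α : Fin n → ℕ} (hα : IsMajorizedBy α lam) : 0 < coeffOf f α := by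
  have hlamS := (hS lam).2 hlam
  rw [hf]
  refine sum_pos' (fun μ hμ => mul_nonneg (hpos μ hμ) (Nat.cast_nonneg _)) ⟨lam, hlamS, ?_⟩
  exact mul_pos ((hpos lam hlamS).lt_of_ne' hclam) (Nat.cast_pos.2
    (Nat.pos_of_ne_zero ((kostkaNumber_ne_zero_iff hlam.1).2 ⟨hlen, hα⟩)))

end kostkaCombination

theorem newton_of_schur_combination_general
    (d n : ℕ)
    (S : Finset (ℕ → ℕ)) (hS : ∀ μ : ℕ → ℕ, μ ∈ S ↔ IsPartitionOf d μ)
    (c : (ℕ → ℕ) → ℝ) (g : (ℕ → ℕ) → MvPolynomial (Fin n) ℝ)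
    (hg : ∀ μ ∈ S, IsSchurPoly n μ (g μ))
    (f : MvPolynomial (Fin n) ℝ) (hf : f = ∑ μ ∈ S, c μ • g μ)
    (lam : ℕ → ℕ) (hlam : IsPartitionOf d lam) (hlen : ∀ m, n ≤ m → lam m = 0)
    (hclam : c lam ≠ 0)
    (hdom : ∀ μ ∈ S, c μ ≠ 0 → Dominates lam μ) :
    newtonPolytope f = permutahedron n lam ∧
      ((∀ μ ∈ S, 0 ≤ c μ) → HasSNP f) := by
  have hcoeff : ∀ α, coeffOf f α = ∑ μ ∈ S, c μ * kostkaNumber n μ α := fun α => by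
    rw [hf, coeffOf_sum_smul]
    exact sum_congr rfl fun μ hμ => by rw [hg μ hμ α, kostkaNumber]
  have hsupp : ∀ α, coeffOf f α ≠ 0 → IsMajorizedBy α lam := fun α =>
    isMajorizedBy_of_coeffOf_ne_zero hS hcoeff hlam hlen hdom
  refine ⟨newtonPolytope_eq_permutahedron hlam.1 hsupp
    (coeffOf_perm_ne_zero hS hcoeff hlam hlen hclam hdom), fun hpos => ?_⟩
  exact hasSNP_of_coeffOf_ne_zero_iff hlam.1 fun α =>
    ⟨hsupp α, fun hα => (coeffOf_pos_of_isMajorizedBy hS hcoeff hlam hlen hclam hpos hα).ne'⟩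

/-- if `f = Σ_μ c_μ s_μ` (sum over partitions `μ` of `d`) in `x_1, …, x_n`,
and `lam` is a partition of `d` with at most `n` parts such that `c_lam ≠ 0` and
`c_μ ≠ 0` only if `μ ⊴ lam`, then `Newton(f) = P_lam`; moreover if all `c_μ ≥ 0`
then `f` has saturated Newton polytope. -/
theorem newton_of_schur_combination
    (d n : ℕ) (hd : 1 ≤ d) (hn : 1 ≤ n)
    (S : Finset (ℕ → ℕ)) (hS : ∀ μ : ℕ → ℕ, μ ∈ S ↔ IsPartitionOf d μ)
    (c : (ℕ → ℕ) → ℝ) (g : (ℕ → ℕ) → MvPolynomial (Fin n) ℝ)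
    (hg : ∀ μ ∈ S, IsSchurPoly n μ (g μ))
    (f : MvPolynomial (Fin n) ℝ) (hf : f = ∑ μ ∈ S, c μ • g μ)
    (lam : ℕ → ℕ) (hlam : IsPartitionOf d lam) (hlen : ∀ m, n ≤ m → lam m = 0)
    (hclam : c lam ≠ 0)
    (hdom : ∀ μ ∈ S, c μ ≠ 0 → Dominates lam μ) :
    newtonPolytope f = permutahedron n lam ∧
      ((∀ μ ∈ S, 0 ≤ c μ) → HasSNP f) :=
  newton_of_schur_combination_general d n S hS c g hg f hf lam hlam hlen hclam hdom
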